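/- Define L(λ) = Γ(γ(λ)) / λ^{γ(λ)} for λ > 0, where γ(λ) is the unique positive solution of λ = exp(ψ(γ)). Then L is strictly monotonically decreasing on (0, ∞), tends to +∞ as λ → 0+, and tends to 0 as λ → +∞. -/

import Mathlib

/-!
Writing `λ = exp (ψ γ)`, the function `y ↦ log Γ(y) - y log λ` is convex on `(0, ∞)` (log-convexity
of `Γ`) with vanishing derivative at `y = γ(λ)`, so `L λ = min_{y > 0} Γ(y) / λ^y`. Each
`Γ(y) / λ^y` is strictly decreasing in `λ`, hence so is their minimum. Taking `y = 1` gives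
`L λ ≤ 1 / λ`, whence `L → 0` at `∞`. As `λ → 0⁺`, monotonicity of `ψ` forces `γ(λ) → 0⁺`, and
`L λ ≥ Γ(γ(λ)) → ∞` once `λ ≤ 1`.
-/

open Real Filter Set

noncomputable def digamma (x : ℝ) : ℝ := deriv Real.Gamma x / Real.Gamma x

open Topology

lemma differentiableAt_Gamma_of_pos {x : ℝ} (hx : 0 < x) : DifferentiableAt ℝ Gamma x :=
  differentiableAt_Gamma fun m => by linarith [(Nat.cast_nonneg m : (0 : ℝ) ≤ m)]

lemma hasDerivAt_log_Gamma {x : ℝ} (hx : 0 < x) :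
    HasDerivAt (log ∘ Gamma) (digamma x) x :=
  (differentiableAt_Gamma_of_pos hx).hasDerivAt.log (Gamma_pos_of_pos hx).ne'

lemma monotoneOn_digamma : MonotoneOn digamma (Ioi 0) :=
  (convexOn_log_Gamma.monotoneOn_deriv fun _ hx => (hasDerivAt_log_Gamma hx).differentiableAt).congr
    fun _ hx => (hasDerivAt_log_Gamma hx).deriv

lemma isMinOn_log_Gamma_sub_digamma_mul {x : ℝ} (hx : 0 < x) :
    IsMinOn (fun y => log (Gamma y) - digamma x * y) (Ioi 0) x := by
  have hconv : ConvexOn ℝ (Ioi 0) (fun y => log (Gamma y) - digamma x * y) :=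
    convexOn_log_Gamma.sub ((LinearMap.mul ℝ ℝ (digamma x)).concaveOn (convex_Ioi 0))
  refine hconv.isMinOn_of_rightDeriv_eq_zero (by rwa [interior_Ioi]) ?_
  have hderiv : HasDerivAt (fun y => log (Gamma y) - digamma x * y) 0 x := by
    simpa using (hasDerivAt_log_Gamma hx).fun_sub ((hasDerivAt_id x).const_mul (digamma x))
  exact hderiv.hasDerivWithinAt.derivWithin (uniqueDiffWithinAt_Ioi x)

lemma Gamma_div_exp_digamma_rpow_le {x y : ℝ} (hx : 0 < x) (hy : 0 < y) :
    Gamma x / exp (digamma x) ^ x ≤ Gamma y / exp (digamma x) ^ y := by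
  have hexp : ∀ z, 0 < z → Gamma z / exp (digamma x) ^ z = exp (log (Gamma z) - digamma x * z) :=
    fun z hz => by rw [exp_sub, exp_log (Gamma_pos_of_pos hz), exp_mul]
  rw [hexp x hx, hexp y hy]
  exact exp_le_exp.2 (isMinOn_log_Gamma_sub_digamma_mul hx hy)

lemma tendsto_Gamma_nhdsGT_zero : Tendsto Gamma (𝓝[>] 0) atTop := by
  have hΓ1 : Tendsto (fun x => Gamma (x + 1)) (𝓝[>] 0) (𝓝 1) := by
    have h := (differentiableAt_Gamma_of_pos one_pos).continuousAt.tendsto.comp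
      ((continuous_add_const (1 : ℝ)).tendsto' 0 1 (zero_add 1))
    rw [Gamma_one] at h
    exact h.mono_left nhdsWithin_le_nhds
  refine (hΓ1.pos_mul_atTop one_pos tendsto_inv_nhdsGT_zero).congr' ?_
  filter_upwards [self_mem_nhdsWithin] with x hx
  rw [Gamma_add_one (ne_of_gt hx), mul_comm x, mul_assoc, mul_inv_cancel₀ (ne_of_gt hx), mul_one]

lemma tendsto_nhdsGT_zero_of_exp_digamma_eq {f : ℝ → ℝ}
    (hf : ∀ lam, 0 < lam → 0 < f lam ∧ exp (digamma (f lam)) = lam) :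
    Tendsto f (𝓝[>] 0) (𝓝[>] 0) := by
  have hpos : ∀ᶠ lam in 𝓝[>] 0, 0 < f lam :=
    eventually_nhdsWithin_of_forall fun lam hlam => (hf lam hlam).1
  refine tendsto_nhdsWithin_iff.2 ⟨tendsto_order.2 ⟨fun a ha => hpos.mono fun _ h => ha.trans h,
    fun ε hε => ?_⟩, hpos⟩
  filter_upwards [Ioo_mem_nhdsGT (exp_pos (digamma ε))] with lam ⟨hlam, hlamε⟩
  by_contra! hεf
  have := exp_le_exp.2 (monotoneOn_digamma hε (hε.trans_le hεf) hεf)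
  rw [(hf lam hlam).2] at this
  exact hlamε.not_ge this

theorem L_strictAnti_and_limits (γfun : ℝ → ℝ)
    (hγ : ∀ lam : ℝ, 0 < lam →
      0 < γfun lam ∧ Real.exp (digamma (γfun lam)) = lam)
    (L : ℝ → ℝ)
    (hL : ∀ lam : ℝ, 0 < lam → L lam = Real.Gamma (γfun lam) / lam ^ γfun lam) :
    StrictAntiOn L (Set.Ioi 0) ∧
    Filter.Tendsto L (nhdsWithin 0 (Set.Ioi 0)) Filter.atTop ∧
    Filter.Tendsto L Filter.atTop (nhds 0) := by
  have hmin : ∀ lam, 0 < lam → ∀ y, 0 < y → L lam ≤ Gamma y / lam ^ y := fun lam hlam y hy => by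
    have h := Gamma_div_exp_digamma_rpow_le (hγ lam hlam).1 hy
    rwa [(hγ lam hlam).2, ← hL lam hlam] at h
  refine ⟨fun l₁ (h₁ : 0 < l₁) l₂ (h₂ : 0 < l₂) h₁₂ => ?_, ?_, ?_⟩
  · have hγ₁ := (hγ l₁ h₁).1
    calc L l₂ ≤ Gamma (γfun l₁) / l₂ ^ γfun l₁ := hmin l₂ h₂ _ hγ₁
      _ < Gamma (γfun l₁) / l₁ ^ γfun l₁ := div_lt_div_of_pos_left (Gamma_pos_of_pos hγ₁)
          (rpow_pos_of_pos h₁ _) (rpow_lt_rpow h₁.le h₁₂ hγ₁)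
      _ = L l₁ := (hL l₁ h₁).symm
  · refine tendsto_atTop_mono' _ ?_
      (tendsto_Gamma_nhdsGT_zero.comp (tendsto_nhdsGT_zero_of_exp_digamma_eq hγ))
    filter_upwards [Ioo_mem_nhdsGT one_pos] with lam ⟨hlam, hlam1⟩
    rw [hL lam hlam]
    exact le_div_self (Gamma_pos_of_pos (hγ lam hlam).1).le (rpow_pos_of_pos hlam _)
      (rpow_le_one hlam.le hlam1.le (hγ lam hlam).1.le)
  · refine squeeze_zero' ?_ ?_ tendsto_inv_atTop_zero
    · filter_upwards [eventually_gt_atTop 0] with lam hlam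
      rw [hL lam hlam]
      exact div_nonneg (Gamma_pos_of_pos (hγ lam hlam).1).le (rpow_pos_of_pos hlam _).le
    · filter_upwards [eventually_gt_atTop 0] with lam hlam
      simpa using hmin lam hlam 1 one_pos
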